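/- Suppose {ν_k}_{k=0}^p are real frequencies satisfying min_{k≠k'} |ν_k - ν_{k'}| ≥ g/T with g ≥ 4, and let W(ν) = 1/(2π·|Tν|·((Tν)² - 1)) for |Tν| > 1. Then for every ν in (ν_k - 2/T, ν_k + 2/T), Σ_{l ≠ k} W(ν - ν_l) ≤ Σ_{m=1}^∞ 2·W((mg - 2)/T) ≤ (16 log 2)/(π g³) < 4/g³. -/

import Mathlib

open Finset

/-- The envelope `W(ν) = 1/(2π·|Tν|·((Tν)² - 1))` for the Hann spectrum tails. -/
noncomputable def hannEnvelope (T ν : ℝ) : ℝ :=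
  1 / (2 * Real.pi * |T * ν| * ((T * ν) ^ 2 - 1))

/-!
For `l ≠ k` put `d = |ν_l - ν_k|`. As `W` decreases in `|Tν|` beyond `1` and
`|T(ν - ν_l)| > T d - 2`, the term `W(ν - ν_l)` is at most the tail term `W(((m + 1) g - 2)/T)`
with `m = ⌊T d / g⌋ - 1`, and the separation makes `l ↦ m` injective on either side of `ν_k`;
hence the sum is at most twice the tail series. Comparing `(m + 1) g - 2 ± 1` with
`g (4m + 2 ± 1) / 4` bounds the tail series by `64 / (π g³)` times
`∑ 1 / ((4m + 1)(4m + 2)(4m + 3)) = log 2 / 4`, which is evaluated through `H_n - log n → γ`.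
-/

open Filter Topology Real

-- partial fractions: `2 / ((4m + 1)(4m + 2)(4m + 3)) = 1 / (4m + 1) - 2 / (4m + 2) + 1 / (4m + 3)`
lemma sum_range_one_div_four_mul_add_mul (N : ℕ) :
    ∑ m ∈ range N, 1 / ((4 * (m : ℝ) + 1) * (4 * m + 2) * (4 * m + 3)) =
      ((harmonic (4 * N) : ℝ) - 3 / 2 * harmonic (2 * N) + 1 / 2 * harmonic N) / 2 := by
  induction N with
  | zero => simp
  | succ n ih =>
    rw [sum_range_succ, ih, show 4 * (n + 1) = 4 * n + 3 + 1 by ring,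
      show 2 * (n + 1) = 2 * n + 1 + 1 by ring]
    simp only [harmonic_succ, show 4 * n + 3 = 4 * n + 2 + 1 by ring,
      show 4 * n + 2 = 4 * n + 1 + 1 by ring]
    push_cast
    field_simp
    ring

lemma tendsto_harmonic_mul_sub_log {c : ℕ} (hc : 0 < c) :
    Tendsto (fun N : ℕ => (harmonic (c * N) : ℝ) - log N) atTop
      (𝓝 (eulerMascheroniConstant + log c)) := by
  have h := (tendsto_harmonic_sub_log.comp (tendsto_id.const_mul_atTop' hc)).add_const (log c)
  refine h.congr' ?_
  filter_upwards [eventually_ge_atTop 1] with N hN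
  have hN0 : (N : ℝ) ≠ 0 := by positivity
  simp only [Function.comp_apply, id, Nat.cast_mul, log_mul (by positivity : (c : ℝ) ≠ 0) hN0]
  ring

lemma hasSum_one_div_four_mul_add_mul :
    HasSum (fun m : ℕ => 1 / ((4 * (m : ℝ) + 1) * (4 * m + 2) * (4 * m + 3))) (log 2 / 4) := by
  rw [hasSum_iff_tendsto_nat_of_nonneg (fun m => by positivity)]
  simp only [sum_range_one_div_four_mul_add_mul]
  have h := (((tendsto_harmonic_mul_sub_log (c := 4) (by norm_num)).sub
    ((tendsto_harmonic_mul_sub_log (c := 2) (by norm_num)).const_mul (3 / 2))).add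
    ((tendsto_harmonic_mul_sub_log (c := 1) one_pos).const_mul (1 / 2))).div_const 2
  convert h using 2 with N
  · simp only [one_mul]; ring
  · push_cast; rw [log_four_eq, log_one]; ring

lemma hannEnvelope_nonneg {T u : ℝ} (h : 1 ≤ |T * u|) : 0 ≤ hannEnvelope T u := by
  have : 0 ≤ (T * u) ^ 2 - 1 := by nlinarith [sq_abs (T * u)]
  unfold hannEnvelope
  positivity

lemma hannEnvelope_le_of_abs_le {T u v : ℝ} (hv : 1 < |T * v|) (h : |T * v| ≤ |T * u|) :
    hannEnvelope T u ≤ hannEnvelope T v := by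
  unfold hannEnvelope
  rw [← sq_abs (T * u), ← sq_abs (T * v)]
  have : 0 < |T * v| ^ 2 - 1 := by nlinarith
  gcongr

lemma two_mul_hannEnvelope_div {T x : ℝ} (hT : T ≠ 0) (hx : 0 ≤ x) :
    2 * hannEnvelope T (x / T) = 1 / (π * ((x - 1) * x * (x + 1))) := by
  rw [hannEnvelope, mul_div_cancel₀ x hT, abs_of_nonneg hx,
    show 2 * π * x * (x ^ 2 - 1) = 2 * (π * ((x - 1) * x * (x + 1))) by ring,
    one_div, one_div, mul_inv, ← mul_assoc, mul_inv_cancel₀ two_ne_zero, one_mul]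

lemma pow_three_mul_prod_le_of_four_le {g : ℝ} (hg : 4 ≤ g) (m : ℕ) :
    g ^ 3 * ((4 * m + 1) * (4 * m + 2) * (4 * m + 3)) ≤
      64 * ((((m : ℝ) + 1) * g - 2 - 1) * ((m + 1) * g - 2) * ((m + 1) * g - 2 + 1)) := by
  have hm : (0 : ℝ) ≤ m := m.cast_nonneg
  have hg4 : 0 ≤ g / 4 := by linarith
  have h1 : g / 4 * (4 * m + 1) ≤ (m + 1) * g - 2 - 1 := by nlinarith
  have h2 : g / 4 * (4 * m + 2) ≤ (m + 1) * g - 2 := by nlinarith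
  have h3 : g / 4 * (4 * m + 3) ≤ (m + 1) * g - 2 + 1 := by nlinarith
  have p1 : 0 ≤ g / 4 * (4 * m + 1) := by positivity
  have p2 : 0 ≤ g / 4 * (4 * m + 2) := by positivity
  have p3 : 0 ≤ g / 4 * (4 * m + 3) := by positivity
  calc g ^ 3 * ((4 * m + 1) * (4 * m + 2) * (4 * m + 3))
      = 64 * ((g / 4 * (4 * m + 1)) * (g / 4 * (4 * m + 2)) * (g / 4 * (4 * m + 3))) := by ring
    _ ≤ _ := by
      gcongr 64 * ?_
      exact mul_le_mul (mul_le_mul h1 h2 p2 (p1.trans h1)) h3 p3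
        (mul_nonneg (p1.trans h1) (p2.trans h2))

lemma two_mul_hannEnvelope_tail_le {T g : ℝ} (hT : T ≠ 0) (hg : 4 ≤ g) (m : ℕ) :
    2 * hannEnvelope T ((((m : ℝ) + 1) * g - 2) / T) ≤
      64 / (π * g ^ 3) * (1 / ((4 * (m : ℝ) + 1) * (4 * m + 2) * (4 * m + 3))) := by
  have hm : (0 : ℝ) ≤ m := m.cast_nonneg
  have hcube := pow_three_mul_prod_le_of_four_le hg m
  have hP : 0 < g ^ 3 * ((4 * (m : ℝ) + 1) * (4 * m + 2) * (4 * m + 3)) := by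
    have : 0 < g := by linarith
    positivity
  rw [two_mul_hannEnvelope_div hT (by nlinarith), div_mul_div_comm, mul_one,
    div_le_div_iff₀ (by nlinarith [pi_pos]) (by nlinarith [pi_pos])]
  nlinarith [mul_le_mul_of_nonneg_left hcube pi_pos.le]

lemma hannEnvelope_tail_nonneg {T g : ℝ} (hT : T ≠ 0) (hg : 3 ≤ g) (m : ℕ) :
    0 ≤ hannEnvelope T ((((m : ℝ) + 1) * g - 2) / T) := by
  have hm : (0 : ℝ) ≤ m := m.cast_nonneg
  apply hannEnvelope_nonneg
  rw [mul_div_cancel₀ _ hT, abs_of_nonneg (by nlinarith)]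
  nlinarith

lemma summable_hannEnvelope_tail {T g : ℝ} (hT : T ≠ 0) (hg : 4 ≤ g) :
    Summable fun m : ℕ => hannEnvelope T ((((m : ℝ) + 1) * g - 2) / T) :=
  (summable_mul_left_iff two_ne_zero).1 <| Summable.of_nonneg_of_le
    (fun m => mul_nonneg zero_le_two (hannEnvelope_tail_nonneg hT (by linarith) m))
    (two_mul_hannEnvelope_tail_le hT hg) (hasSum_one_div_four_mul_add_mul.mul_left _).summable

lemma tsum_two_mul_hannEnvelope_tail_le {T g : ℝ} (hT : T ≠ 0) (hg : 4 ≤ g) :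
    ∑' m : ℕ, 2 * hannEnvelope T ((((m : ℝ) + 1) * g - 2) / T) ≤
      16 * log 2 / (π * g ^ 3) := by
  refine (hasSum_le (two_mul_hannEnvelope_tail_le hT hg)
    ((summable_hannEnvelope_tail hT hg).mul_left 2).hasSum
    (hasSum_one_div_four_mul_add_mul.mul_left _)).trans_eq ?_
  field_simp
  ring

lemma Nat.floor_ne_floor_of_one_le_abs_sub {R : Type*} [Field R] [LinearOrder R]
    [IsStrictOrderedRing R] [FloorRing R] {a b : R} (ha : 0 ≤ a) (hb : 0 ≤ b)
    (h : 1 ≤ |a - b|) : ⌊a⌋₊ ≠ ⌊b⌋₊ := by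
  intro hab
  have := Int.abs_sub_lt_one_of_floor_eq_floor (a := a) (b := b)
    (by rw [← Int.natCast_floor_eq_floor ha, ← Int.natCast_floor_eq_floor hb, hab])
  linarith

lemma abs_abs_sub_sub_abs_sub_of_iff {G : Type*} [AddCommGroup G] [LinearOrder G]
    [IsOrderedAddMonoid G] {a b c : G} (h : c < a ↔ c < b) :
    |(|a - c| - |b - c|)| = |a - b| := by
  by_cases ha : c < a
  · rw [abs_of_pos (sub_pos.2 ha), abs_of_pos (sub_pos.2 (h.1 ha)), sub_sub_sub_cancel_right]
  · rw [abs_of_nonpos (sub_nonpos.2 (not_lt.1 ha)),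
      abs_of_nonpos (sub_nonpos.2 (not_lt.1 (mt h.2 ha))), neg_sub_neg,
      sub_sub_sub_cancel_right, abs_sub_comm]

lemma injOn_natFloor_abs_sub_div_sub_one {ι : Type*} {x : ι → ℝ} {c δ : ℝ} {s : Set ι}
    (hδ : 0 < δ) (hsep : s.Pairwise fun i j => δ ≤ |x i - x j|)
    (hfar : ∀ i ∈ s, δ ≤ |x i - c|) (hside : ∀ i ∈ s, ∀ j ∈ s, (c < x i ↔ c < x j)) :
    s.InjOn fun i => ⌊|x i - c| / δ - 1⌋₊ := by
  intro i hi j hj hij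
  by_contra hne
  have hnonneg : ∀ l ∈ s, 0 ≤ |x l - c| / δ - 1 := fun l hl =>
    sub_nonneg.2 ((one_le_div hδ).2 (hfar l hl))
  refine Nat.floor_ne_floor_of_one_le_abs_sub (hnonneg i hi) (hnonneg j hj) ?_ hij
  rw [sub_sub_sub_cancel_right, ← sub_div, abs_div, abs_of_pos hδ,
    abs_abs_sub_sub_abs_sub_of_iff (hside i hi j hj), one_le_div hδ]
  exact hsep hi hj hne

lemma sum_comp_le_tsum_of_injOn {ι κ : Type*} {s : Finset ι} {f : κ → ℝ} {key : ι → κ}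
    (hf : ∀ m, 0 ≤ f m) (hsum : Summable f) (hkey : Set.InjOn key s) :
    ∑ i ∈ s, f (key i) ≤ ∑' m, f m := by
  classical
  rw [← sum_image hkey]
  exact hsum.sum_le_tsum _ fun m _ => hf m

lemma hannEnvelope_sub_le_tail {T g c ν x : ℝ} (hT : 0 < T) (hg : 3 < g)
    (hν : |ν - c| < 2 / T) (hx : g / T ≤ |x - c|) :
    hannEnvelope T (ν - x) ≤
      hannEnvelope T ((((⌊|x - c| / (g / T) - 1⌋₊ : ℕ) + 1 : ℝ) * g - 2) / T) := by
  set m := ⌊|x - c| / (g / T) - 1⌋₊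
  have hδ : 0 < g / T := div_pos (by linarith) hT
  have hm : ((m : ℝ) + 1) * g ≤ T * |x - c| := by
    have := Nat.floor_le (sub_nonneg.2 ((one_le_div hδ).2 hx))
    rw [le_sub_iff_add_le, le_div_iff₀ hδ] at this
    rw [mul_div_assoc', div_le_iff₀ hT] at this
    rwa [mul_comm T]
  have hm0 : (0 : ℝ) ≤ m := m.cast_nonneg
  apply hannEnvelope_le_of_abs_le
  · rw [mul_div_cancel₀ _ hT.ne', abs_of_nonneg (by nlinarith)]
    nlinarith
  · rw [mul_div_cancel₀ _ hT.ne', abs_mul, abs_of_pos hT]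
    have hT2 : T * |ν - c| < 2 := by rwa [lt_div_iff₀' hT] at hν
    have htri : |x - c| ≤ |ν - x| + |ν - c| := by
      rw [abs_sub_comm ν x]; exact abs_sub_le x ν c
    have hA : (0 : ℝ) ≤ (m + 1) * g - 2 := by nlinarith
    rw [abs_of_nonneg hA]
    nlinarith [mul_le_mul_of_nonneg_left htri hT.le]

lemma sum_hannEnvelope_le_tsum_tail {ι : Type*} {T g c ν : ℝ} {x : ι → ℝ} {s : Finset ι}
    (hT : 0 < T) (hg : 4 ≤ g) (hsep : (s : Set ι).Pairwise fun i j => g / T ≤ |x i - x j|)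
    (hfar : ∀ i ∈ s, g / T ≤ |x i - c|) (hν : |ν - c| < 2 / T) :
    ∑ i ∈ s, hannEnvelope T (ν - x i) ≤
      ∑' m : ℕ, 2 * hannEnvelope T ((((m : ℝ) + 1) * g - 2) / T) := by
  set f : ℕ → ℝ := fun m => hannEnvelope T ((((m : ℝ) + 1) * g - 2) / T)
  set key : ι → ℕ := fun i => ⌊|x i - c| / (g / T) - 1⌋₊
  have hδ : 0 < g / T := div_pos (by linarith) hT
  have hf : ∀ m, 0 ≤ f m := hannEnvelope_tail_nonneg hT.ne' (by linarith)
  have hsum : Summable f := summable_hannEnvelope_tail hT.ne' hg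
  have hinj : ∀ t ⊆ s, (∀ i ∈ t, ∀ j ∈ t, (c < x i ↔ c < x j)) → Set.InjOn key t :=
    fun t hts hside => injOn_natFloor_abs_sub_div_sub_one hδ (hsep.mono (coe_subset.2 hts))
      (fun i hi => hfar i (hts hi)) hside
  calc ∑ i ∈ s, hannEnvelope T (ν - x i) ≤ ∑ i ∈ s, f (key i) :=
        sum_le_sum fun i hi => hannEnvelope_sub_le_tail hT (by linarith) hν (hfar i hi)
    _ = ∑ i ∈ s with c < x i, f (key i) + ∑ i ∈ s with ¬c < x i, f (key i) :=
        (sum_filter_add_sum_filter_not _ _ _).symm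
    _ ≤ ∑' m, f m + ∑' m, f m :=
        add_le_add
          (sum_comp_le_tsum_of_injOn hf hsum <| hinj _ (filter_subset _ _) fun _ hi _ hj =>
            iff_of_true (mem_filter.1 hi).2 (mem_filter.1 hj).2)
          (sum_comp_le_tsum_of_injOn hf hsum <| hinj _ (filter_subset _ _) fun _ hi _ hj =>
            iff_of_false (mem_filter.1 hi).2 (mem_filter.1 hj).2)
    _ = ∑' m, 2 * f m := by rw [tsum_mul_left]; ring

/-- Leakage tail bound: if the frequencies are pairwise separated by at least `g/T`
with `g ≥ 4`, then for any `ν` within `2/T` of `ν_k`,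
`Σ_{l≠k} W(ν - ν_l) ≤ Σ_{m≥1} 2 W((mg-2)/T) ≤ (16 log 2)/(π g³) < 4/g³`. -/
theorem hann_leakage_tail_bound (T g : ℝ) (hT : 0 < T) (hg : 4 ≤ g) (p : ℕ)
    (νf : Fin (p + 1) → ℝ)
    (hsep : ∀ k k' : Fin (p + 1), k ≠ k' → g / T ≤ |νf k - νf k'|)
    (k : Fin (p + 1)) (ν : ℝ) (hν : ν ∈ Set.Ioo (νf k - 2 / T) (νf k + 2 / T)) :
    (∑ l ∈ Finset.univ.erase k, hannEnvelope T (ν - νf l)) ≤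
        (∑' m : ℕ, 2 * hannEnvelope T ((((m : ℝ) + 1) * g - 2) / T)) ∧
    (∑' m : ℕ, 2 * hannEnvelope T ((((m : ℝ) + 1) * g - 2) / T)) ≤
        16 * Real.log 2 / (Real.pi * g ^ 3) ∧
    16 * Real.log 2 / (Real.pi * g ^ 3) < 4 / g ^ 3 := by
  have hνk : |ν - νf k| < 2 / T := abs_sub_lt_iff.2 ⟨by linarith [hν.2], by linarith [hν.1]⟩
  refine ⟨sum_hannEnvelope_le_tsum_tail hT hg (fun i _ j _ hij => hsep i j hij)
    (fun l hl => hsep l k (ne_of_mem_erase hl)) hνk,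
    tsum_two_mul_hannEnvelope_tail_le hT.ne' hg, ?_⟩
  have hπ : 4 * log 2 < π := by linarith [log_two_lt_d9, pi_gt_three]
  rw [div_lt_div_iff₀ (by positivity) (by positivity)]
  nlinarith [pow_pos (by linarith : (0 : ℝ) < g) 3]
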